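/- arXiv:1806.06088 — 2 statements merged into one kernel-verified Lean document; each statement's English description precedes it below -/
import Mathlib

section
/- Pseudo-linearization identity for flows (Lemma 8.1 of the survey, stated on a Banach space): Let E be a real Banach space, let V : E → E be continuous and let W : E → E. Suppose ψ : ℝ × E → E is continuously differentiable and is a flow of W, i.e. ψ(0,y) = y and ψ(s+s',y) = ψ(s, ψ(s',y)) for all s,s' ∈ ℝ, y ∈ E, and ∂ψ/∂s(s,y) = W(ψ(s,y)) for all s,y. Let t > 0 and let x : [0,t] → E be differentiable with x'(s) = V(x(s)) for all s ∈ [0,t]. Then ψ(t, x(0)) − x(t) = ∫₀ᵗ D_yψ(t−s, x(s)) [W(x(s)) − V(x(s))] ds, where D_yψ(σ, y) denotes the Fréchet derivative of the map y ↦ ψ(σ, y) at y. -/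
/-!
Along the integral curve `x` of `V`, consider `g s = ψ(t - s, x s)`, which runs from `ψ(t, x 0)`
to `x t`. By the chain rule `g' s = -∂ₜψ(t - s, x s) + D_yψ(t - s, x s) (V (x s))`. Differentiating
`ψ(σ + s', y) = ψ(σ, ψ(s', y))` at `s' = 0` shows that the flow transports its own vector field,
`D_yψ(σ, y) (W y) = W (ψ(σ, y))`, so `∂ₜψ(t - s, x s) = D_yψ(t - s, x s) (W (x s))` and
`g' s = -D_yψ(t - s, x s) (W (x s) - V (x s))`. The identity is the fundamental theorem of
calculus for `g`.
-/

open MeasureTheory Set ContinuousLinearMap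

section PartialDerivatives

variable {E F : Type*} [NormedAddCommGroup E] [NormedSpace ℝ E] [NormedAddCommGroup F]
  [NormedSpace ℝ F] {ψ : ℝ × E → F}

theorem fderiv_comp_prodMk_right {σ : ℝ} {y : E} (h : DifferentiableAt ℝ ψ (σ, y)) :
    fderiv ℝ (fun y => ψ (σ, y)) y = (fderiv ℝ ψ (σ, y)).comp (inr ℝ ℝ E) :=
  (h.hasFDerivAt.comp y (hasFDerivAt_prodMk_right σ y)).fderiv

theorem hasDerivAt_comp_prodMk_left {σ : ℝ} {y : E} (h : DifferentiableAt ℝ ψ (σ, y)) :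
    HasDerivAt (fun σ => ψ (σ, y)) (fderiv ℝ ψ (σ, y) (1, 0)) σ :=
  h.hasFDerivAt.comp_hasDerivAt σ ((hasDerivAt_id σ).prodMk (hasDerivAt_const σ y))

theorem hasDerivAt_comp_prodMk {a : ℝ → ℝ} {x : ℝ → E} {α s : ℝ} {v : E}
    (h : DifferentiableAt ℝ ψ (a s, x s)) (ha : HasDerivAt a α s) (hx : HasDerivAt x v s) :
    HasDerivAt (fun s => ψ (a s, x s))
      (α • fderiv ℝ ψ (a s, x s) (1, 0) + fderiv ℝ (fun y => ψ (a s, y)) (x s) v) s := by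
  have hsplit : ((α, v) : ℝ × E) = α • ((1 : ℝ), (0 : E)) + ((0 : ℝ), v) := by simp
  rw [fderiv_comp_prodMk_right h, comp_apply, inr_apply, ← map_smul, ← map_add, ← hsplit]
  exact h.hasFDerivAt.comp_hasDerivAt s (ha.prodMk hx)

theorem continuousOn_fderiv_comp_prodMk_right_apply (hψ : ContDiff ℝ 1 ψ) {s : Set ℝ}
    {a : ℝ → ℝ} {x : ℝ → E} {v : ℝ → E} (ha : ContinuousOn a s) (hx : ContinuousOn x s)
    (hv : ContinuousOn v s) :
    ContinuousOn (fun r => fderiv ℝ (fun y => ψ (a r, y)) (x r) (v r)) s := by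
  simp only [fderiv_comp_prodMk_right (hψ.differentiable one_ne_zero _), comp_apply,
    inr_apply]
  exact ((hψ.continuous_fderiv one_ne_zero).comp_continuousOn (ha.prodMk hx)).clm_apply
    (continuousOn_const.prodMk hv)

end PartialDerivatives

section Flow

variable {E : Type*} [NormedAddCommGroup E] [NormedSpace ℝ E] {ψ : ℝ × E → E} {W : E → E}

theorem fderiv_flow_time_apply (hflowderiv : ∀ (s : ℝ) (y : E),
      HasDerivAt (fun σ : ℝ => ψ (σ, y)) (W (ψ (s, y))) s)
    {σ : ℝ} {y : E} (h : DifferentiableAt ℝ ψ (σ, y)) :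
    fderiv ℝ ψ (σ, y) (1, 0) = W (ψ (σ, y)) :=
  (hasDerivAt_comp_prodMk_left h).unique (hflowderiv σ y)

theorem continuous_vectorField_of_flow (hψ : ContDiff ℝ 1 ψ) (hflow0 : ∀ y : E, ψ (0, y) = y)
    (hflowderiv : ∀ (s : ℝ) (y : E), HasDerivAt (fun σ : ℝ => ψ (σ, y)) (W (ψ (s, y))) s) :
    Continuous W := by
  have hW : W = fun y => fderiv ℝ ψ (0, y) (1, 0) := by
    funext y
    rw [fderiv_flow_time_apply hflowderiv (hψ.differentiable one_ne_zero _), hflow0]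
  rw [hW]
  exact ((hψ.continuous_fderiv one_ne_zero).comp (continuous_const.prodMk continuous_id)).clm_apply
    continuous_const

theorem fderiv_flow_apply_vectorField (hflow0 : ∀ y : E, ψ (0, y) = y)
    (hflowadd : ∀ (s s' : ℝ) (y : E), ψ (s + s', y) = ψ (s, ψ (s', y)))
    (hflowderiv : ∀ (s : ℝ) (y : E), HasDerivAt (fun σ : ℝ => ψ (σ, y)) (W (ψ (s, y))) s)
    {σ : ℝ} {y : E} (h : DifferentiableAt ℝ (fun y => ψ (σ, y)) y) :
    fderiv ℝ (fun y => ψ (σ, y)) y (W y) = W (ψ (σ, y)) := by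
  have hshift : HasDerivAt (fun s' => ψ (σ + s', y)) (W (ψ (σ, y))) 0 := by
    simpa using HasDerivAt.comp_const_add σ 0 (by rw [add_zero]; exact hflowderiv σ y)
  have hstart : HasDerivAt (fun s' => ψ (s', y)) (W y) 0 := by
    simpa only [hflow0] using hflowderiv 0 y
  have hcomp : HasDerivAt (fun s' => ψ (σ, ψ (s', y)))
      (fderiv ℝ (fun y => ψ (σ, y)) y (W y)) 0 := by
    rw [← hflow0 y] at h
    simpa only [hflow0, Function.comp_def] using h.hasFDerivAt.comp_hasDerivAt 0 hstart
  simp only [hflowadd] at hshift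
  exact hcomp.unique hshift

theorem hasDerivAt_flow_comp_curve (hψ : Differentiable ℝ ψ) (hflow0 : ∀ y : E, ψ (0, y) = y)
    (hflowadd : ∀ (s s' : ℝ) (y : E), ψ (s + s', y) = ψ (s, ψ (s', y)))
    (hflowderiv : ∀ (s : ℝ) (y : E), HasDerivAt (fun σ : ℝ => ψ (σ, y)) (W (ψ (s, y))) s)
    {V : E → E} {x : ℝ → E} {t s : ℝ} (hx : HasDerivAt x (V (x s)) s) :
    HasDerivAt (fun s => ψ (t - s, x s))
      (-fderiv ℝ (fun y => ψ (t - s, y)) (x s) (W (x s) - V (x s))) s := by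
  rw [map_sub, neg_sub, sub_eq_neg_add]
  have h := hasDerivAt_comp_prodMk (hψ _) ((hasDerivAt_id' s).const_sub t) hx
  rwa [fderiv_flow_time_apply hflowderiv (hψ _),
    ← fderiv_flow_apply_vectorField hflow0 hflowadd hflowderiv
      ((hψ _).comp _ ((differentiableAt_const _).prodMk differentiableAt_id)),
    neg_one_smul] at h

end Flow

/-- **Pseudo-linearization identity for flows** (Lemma 8.1 of the survey).
If `ψ` is a `C¹` flow of the vector field `W` on a Banach space `E` and
`x` is an integral curve of `V` on `[0, t]`, then
`ψ(t, x 0) − x t = ∫₀ᵗ D_yψ(t−s, x s) [W(x s) − V(x s)] ds`. -/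
theorem pseudo_linearization_identity
    {E : Type*} [NormedAddCommGroup E] [NormedSpace ℝ E] [CompleteSpace E]
    (V : E → E) (hV : Continuous V) (W : E → E)
    (ψ : ℝ × E → E) (hψ : ContDiff ℝ 1 ψ)
    (hflow0 : ∀ y : E, ψ (0, y) = y)
    (hflowadd : ∀ (s s' : ℝ) (y : E), ψ (s + s', y) = ψ (s, ψ (s', y)))
    (hflowderiv : ∀ (s : ℝ) (y : E), HasDerivAt (fun σ : ℝ => ψ (σ, y)) (W (ψ (s, y))) s)
    (t : ℝ) (ht : 0 < t)
    (x : ℝ → E) (hx : ∀ s ∈ Set.Icc (0 : ℝ) t, HasDerivAt x (V (x s)) s) :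
    ψ (t, x 0) - x t =
      ∫ s in (0 : ℝ)..t,
        (fderiv ℝ (fun y : E => ψ (t - s, y)) (x s)) (W (x s) - V (x s)) := by
  rw [← uIcc_of_le ht.le] at hx
  have hxc : ContinuousOn x (uIcc 0 t) := fun s hs => (hx s hs).continuousAt.continuousWithinAt
  have hW := continuous_vectorField_of_flow hψ hflow0 hflowderiv
  have hint : IntervalIntegrable
      (fun s => fderiv ℝ (fun y => ψ (t - s, y)) (x s) (W (x s) - V (x s))) volume 0 t :=
    (continuousOn_fderiv_comp_prodMk_right_apply hψ (by fun_prop) hxc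
      ((hW.comp_continuousOn hxc).sub (hV.comp_continuousOn hxc))).intervalIntegrable
  have hftc := intervalIntegral.integral_eq_sub_of_hasDerivAt
    (fun s hs => hasDerivAt_flow_comp_curve (hψ.differentiable one_ne_zero) hflow0 hflowadd
      hflowderiv (hx s hs)) hint.neg
  rw [intervalIntegral.integral_neg, sub_self, sub_zero, hflow0] at hftc
  rw [← neg_neg (intervalIntegral _ _ _ _), hftc, neg_sub]
end

section
/- Two-dimensional Pestov identity in isothermal coordinates (the n = 2 case of Lemma 3.2 of the survey, on the conformal plane): Let λ : ℝ² → ℝ be smooth and define the operators on smooth functions u(x, y, θ) on ℝ² × ℝ by X u = e^{−λ}(cos θ ∂ₓu + sin θ ∂ᵧu + (−sin θ ∂ₓλ + cos θ ∂ᵧλ) ∂_θ u) and V u = ∂_θ u, and let κ = −e^{−2λ}(∂ₓₓλ + ∂ᵧᵧλ). Let u : ℝ² × ℝ → ℝ be smooth, 2π-periodic in θ, and such that u(x, y, θ) = 0 whenever (x, y) lies outside some compact subset of ℝ². Then ∫₀^{2π} ∫_{ℝ²} (V(Xu))² e^{2λ} dx dy dθ = ∫₀^{2π} ∫_{ℝ²}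 (X(Vu))² e^{2λ} dx dy dθ − ∫₀^{2π} ∫_{ℝ²} κ (Vu)² e^{2λ} dx dy dθ + ∫₀^{2π} ∫_{ℝ²} (Xu)² e^{2λ} dx dy dθ. -/
open MeasureTheory

noncomputable def pdx (u : ℝ → ℝ → ℝ → ℝ) (x y θ : ℝ) : ℝ :=
  deriv (fun x' => u x' y θ) x

noncomputable def pdy (u : ℝ → ℝ → ℝ → ℝ) (x y θ : ℝ) : ℝ :=
  deriv (fun y' => u x y' θ) y

noncomputable def pdθ (u : ℝ → ℝ → ℝ → ℝ) (x y θ : ℝ) : ℝ :=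
  deriv (fun θ' => u x y θ') θ

/-- The geodesic vector field `X` of the metric `e^{2λ}(dx² + dy²)` in isothermal
coordinates, acting on functions on the circle bundle `ℝ² × ℝ`. -/
noncomputable def Xgeo (lam : ℝ → ℝ → ℝ) (u : ℝ → ℝ → ℝ → ℝ) : ℝ → ℝ → ℝ → ℝ :=
  fun x y θ =>
    Real.exp (-(lam x y)) *
      (Real.cos θ * pdx u x y θ + Real.sin θ * pdy u x y θ +
        (-Real.sin θ * deriv (fun x' => lam x' y) x +
          Real.cos θ * deriv (fun y' => lam x y') y) * pdθ u x y θ)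

/-- The vertical vector field `V = ∂_θ`. -/
noncomputable def Vvert (u : ℝ → ℝ → ℝ → ℝ) : ℝ → ℝ → ℝ → ℝ :=
  fun x y θ => pdθ u x y θ

/-- The Gauss curvature `κ = −e^{−2λ}(∂ₓₓλ + ∂ᵧᵧλ)` of `e^{2λ}(dx² + dy²)`. -/
noncomputable def gaussCurv (lam : ℝ → ℝ → ℝ) (x y : ℝ) : ℝ :=
  -Real.exp (-(2 * lam x y)) *
    (deriv (fun x' => deriv (fun x'' => lam x'' y) x') x +
      deriv (fun y' => deriv (fun y'' => lam x y'') y') y)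

namespace PestovProof

variable {E : Type*} [NormedAddCommGroup E] [NormedSpace ℝ E]

noncomputable def pd (F : E → ℝ) (v : E) (p : E) : ℝ := fderiv ℝ F p v

lemma contDiff_pd {F : E → ℝ} (hF : ContDiff ℝ (⊤ : ℕ∞) F) (v : E) : ContDiff ℝ (⊤ : ℕ∞) (pd F v) :=
  (hF.fderiv_right (by simp)).clm_apply contDiff_const

lemma continuous_pd {F : E → ℝ} (hF : ContDiff ℝ (⊤ : ℕ∞) F) (v : E) : Continuous (pd F v) :=
  (contDiff_pd hF v).continuous

lemma hasDerivAt_slice {F : E → ℝ} (hF : ContDiff ℝ (⊤ : ℕ∞) F) {γ : ℝ → E} {t : ℝ} {v : E}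
    (hγ : HasDerivAt γ v t) : HasDerivAt (fun s => F (γ s)) (pd F v (γ t)) t :=
  ((hF.differentiable (by simp) (γ t)).hasFDerivAt).comp_hasDerivAt t hγ

lemma pd_comm {F : E → ℝ} (hF : ContDiff ℝ (⊤ : ℕ∞) F) (v w : E) (p : E) :
    pd (pd F v) w p = pd (pd F w) v p := by
  have hsymm : IsSymmSndFDerivAt ℝ F p := hF.contDiffAt.isSymmSndFDerivAt (by rw [minSmoothness_of_isRCLikeNormedField]; exact (WithTop.coe_le_coe.2 le_top : ((2:ℕ∞) : WithTop ℕ∞) ≤ ↑(⊤:ℕ∞)))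
  have hd : ∀ z : E, HasFDerivAt (fun q => fderiv ℝ F q z)
      ((fderiv ℝ (fderiv ℝ F) p).flip z) p := by
    intro z
    have hc : HasFDerivAt (fderiv ℝ F) (fderiv ℝ (fderiv ℝ F) p) p :=
      (((hF.fderiv_right (m := (⊤ : ℕ∞)) (by simp)).differentiable (by simp)) p).hasFDerivAt
    have := hc.clm_apply (hasFDerivAt_const z p)
    simpa using this
  have h1 : pd (pd F v) w p = fderiv ℝ (fderiv ℝ F) p w v := by
    show fderiv ℝ (fun q => fderiv ℝ F q v) p w = _
    rw [(hd v).fderiv]; rfl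
  have h2 : pd (pd F w) v p = fderiv ℝ (fderiv ℝ F) p v w := by
    show fderiv ℝ (fun q => fderiv ℝ F q w) p v = _
    rw [(hd w).fderiv]; rfl
  rw [h1, h2, hsymm.eq]

lemma pd_zero_of_locally_zero {F : E → ℝ} {S : Set E} (hS : IsOpen S)
    (h0 : ∀ q ∈ S, F q = 0) {p : E} (hp : p ∈ S) (v : E) : pd F v p = 0 := by
  have hev : F =ᶠ[nhds p] (fun _ => (0:ℝ)) :=
    Filter.eventuallyEq_iff_exists_mem.2 ⟨S, hS.mem_nhds hp, h0⟩
  show fderiv ℝ F p v = 0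
  rw [hev.fderiv_eq, fderiv_fun_const]
  rfl

abbrev E3 := ℝ × ℝ × ℝ

def e1 : E3 := (1, 0, 0)
def e2 : E3 := (0, 1, 0)
def e3 : E3 := (0, 0, 1)
def f1 : ℝ × ℝ := (1, 0)
def f2 : ℝ × ℝ := (0, 1)

noncomputable def UU (u : ℝ → ℝ → ℝ → ℝ) : E3 → ℝ := fun p => u p.1 p.2.1 p.2.2
noncomputable def LL (lam : ℝ → ℝ → ℝ) : ℝ × ℝ → ℝ := fun q => lam q.1 q.2

lemma curve_x (x y θ : ℝ) : HasDerivAt (fun t => ((t, y, θ) : E3)) e1 x :=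
  (hasDerivAt_id x).prodMk ((hasDerivAt_const x y).prodMk (hasDerivAt_const x θ))

lemma curve_y (x y θ : ℝ) : HasDerivAt (fun t => ((x, t, θ) : E3)) e2 y :=
  (hasDerivAt_const y x).prodMk ((hasDerivAt_id y).prodMk (hasDerivAt_const y θ))

lemma curve_θ (x y θ : ℝ) : HasDerivAt (fun t => ((x, y, t) : E3)) e3 θ :=
  (hasDerivAt_const θ x).prodMk ((hasDerivAt_const θ y).prodMk (hasDerivAt_id θ))

lemma curve2_x (x y : ℝ) : HasDerivAt (fun t => ((t, y) : ℝ × ℝ)) f1 x :=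
  (hasDerivAt_id x).prodMk (hasDerivAt_const x y)

lemma curve2_y (x y : ℝ) : HasDerivAt (fun t => ((x, t) : ℝ × ℝ)) f2 y :=
  (hasDerivAt_const y x).prodMk (hasDerivAt_id y)

section Bridges

variable {u : ℝ → ℝ → ℝ → ℝ} {lam : ℝ → ℝ → ℝ}

lemma pdx_eq (hu : ContDiff ℝ (⊤ : ℕ∞) (UU u)) (x y θ : ℝ) :
    pdx u x y θ = pd (UU u) e1 (x, y, θ) :=
  (hasDerivAt_slice hu (curve_x x y θ)).deriv

lemma pdy_eq (hu : ContDiff ℝ (⊤ : ℕ∞) (UU u)) (x y θ : ℝ) :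
    pdy u x y θ = pd (UU u) e2 (x, y, θ) :=
  (hasDerivAt_slice hu (curve_y x y θ)).deriv

lemma pdθ_eq (hu : ContDiff ℝ (⊤ : ℕ∞) (UU u)) (x y θ : ℝ) :
    pdθ u x y θ = pd (UU u) e3 (x, y, θ) :=
  (hasDerivAt_slice hu (curve_θ x y θ)).deriv

lemma lamx_eq (hl : ContDiff ℝ (⊤ : ℕ∞) (LL lam)) (x y : ℝ) :
    deriv (fun x' => lam x' y) x = pd (LL lam) f1 (x, y) :=
  (hasDerivAt_slice hl (curve2_x x y)).deriv

lemma lamy_eq (hl : ContDiff ℝ (⊤ : ℕ∞) (LL lam)) (x y : ℝ) :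
    deriv (fun y' => lam x y') y = pd (LL lam) f2 (x, y) :=
  (hasDerivAt_slice hl (curve2_y x y)).deriv

end Bridges

end PestovProof

namespace PestovProof

section Fields

variable (lam : ℝ → ℝ → ℝ) (u : ℝ → ℝ → ℝ → ℝ)

/-- The geodesic field as a function on `E3`, in canonical `pd` atoms. -/
noncomputable def Xg3 : E3 → ℝ := fun p =>
  Real.exp (-(lam p.1 p.2.1)) *
    (Real.cos p.2.2 * pd (UU u) e1 p + Real.sin p.2.2 * pd (UU u) e2 p +
      (-Real.sin p.2.2 * pd (LL lam) f1 (p.1, p.2.1) +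
        Real.cos p.2.2 * pd (LL lam) f2 (p.1, p.2.1)) * pd (UU u) e3 p)

/-- The perpendicular field `X_⊥`. -/
noncomputable def Xp3 : E3 → ℝ := fun p =>
  Real.exp (-(lam p.1 p.2.1)) *
    (-Real.sin p.2.2 * pd (UU u) e1 p + Real.cos p.2.2 * pd (UU u) e2 p -
      (Real.cos p.2.2 * pd (LL lam) f1 (p.1, p.2.1) +
        Real.sin p.2.2 * pd (LL lam) f2 (p.1, p.2.1)) * pd (UU u) e3 p)

noncomputable def AA : E3 → ℝ := fun p =>
  Real.exp (lam p.1 p.2.1) * pd (UU u) e3 p *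
    (Real.cos p.2.2 * Xp3 lam u p + Real.sin p.2.2 * Xg3 lam u p)

noncomputable def BB : E3 → ℝ := fun p =>
  Real.exp (lam p.1 p.2.1) * pd (UU u) e3 p *
    (Real.sin p.2.2 * Xp3 lam u p - Real.cos p.2.2 * Xg3 lam u p)

noncomputable def CC : E3 → ℝ := fun p =>
  Real.exp (lam p.1 p.2.1) * pd (UU u) e3 p *
    ((-Real.sin p.2.2 * pd (LL lam) f1 (p.1, p.2.1) +
        Real.cos p.2.2 * pd (LL lam) f2 (p.1, p.2.1)) * Xp3 lam u p +
      (Real.cos p.2.2 * pd (LL lam) f1 (p.1, p.2.1) +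
        Real.sin p.2.2 * pd (LL lam) f2 (p.1, p.2.1)) * Xg3 lam u p) +
    Real.exp (lam p.1 p.2.1) * Real.exp (lam p.1 p.2.1) * (Xp3 lam u p * Xg3 lam u p)

variable {lam u}

lemma contDiff_proj12 : ContDiff ℝ (⊤ : ℕ∞) (fun p : E3 => (p.1, p.2.1)) :=
  contDiff_fst.prodMk (contDiff_fst.comp contDiff_snd)

lemma contDiff_proj3 : ContDiff ℝ (⊤ : ℕ∞) (fun p : E3 => p.2.2) :=
  contDiff_snd.comp contDiff_snd

section Smooth

variable (hl : ContDiff ℝ (⊤ : ℕ∞) (LL lam)) (hu : ContDiff ℝ (⊤ : ℕ∞) (UU u))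
include hl hu

lemma contDiff_Xg3 : ContDiff ℝ (⊤ : ℕ∞) (Xg3 lam u) := by
  unfold Xg3
  have hlam : ContDiff ℝ (⊤ : ℕ∞) (fun p : E3 => lam p.1 p.2.1) := hl.comp contDiff_proj12
  exact ((Real.contDiff_exp.comp hlam.neg)).mul
    ((((Real.contDiff_cos.comp contDiff_proj3).mul ((contDiff_pd hu e1))).add
      ((Real.contDiff_sin.comp contDiff_proj3).mul ((contDiff_pd hu e2)))).add
      ((((Real.contDiff_sin.comp contDiff_proj3).neg.mul
          ((contDiff_pd hl f1).comp contDiff_proj12)).add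
        ((Real.contDiff_cos.comp contDiff_proj3).mul
          ((contDiff_pd hl f2).comp contDiff_proj12))).mul ((contDiff_pd hu e3))))

lemma contDiff_Xp3 : ContDiff ℝ (⊤ : ℕ∞) (Xp3 lam u) := by
  unfold Xp3
  have hlam : ContDiff ℝ (⊤ : ℕ∞) (fun p : E3 => lam p.1 p.2.1) := hl.comp contDiff_proj12
  exact ((Real.contDiff_exp.comp hlam.neg)).mul
    ((((Real.contDiff_sin.comp contDiff_proj3).neg.mul ((contDiff_pd hu e1))).add
      ((Real.contDiff_cos.comp contDiff_proj3).mul ((contDiff_pd hu e2)))).sub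
      ((((Real.contDiff_cos.comp contDiff_proj3).mul
          ((contDiff_pd hl f1).comp contDiff_proj12)).add
        ((Real.contDiff_sin.comp contDiff_proj3).mul
          ((contDiff_pd hl f2).comp contDiff_proj12))).mul ((contDiff_pd hu e3))))

lemma contDiff_AA : ContDiff ℝ (⊤ : ℕ∞) (AA lam u) := by
  unfold AA
  have hlam : ContDiff ℝ (⊤ : ℕ∞) (fun p : E3 => lam p.1 p.2.1) := hl.comp contDiff_proj12
  exact ((Real.contDiff_exp.comp hlam).mul (contDiff_pd hu e3)).mul
    (((Real.contDiff_cos.comp contDiff_proj3).mul (contDiff_Xp3 hl hu)).add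
      ((Real.contDiff_sin.comp contDiff_proj3).mul (contDiff_Xg3 hl hu)))

lemma contDiff_BB : ContDiff ℝ (⊤ : ℕ∞) (BB lam u) := by
  unfold BB
  have hlam : ContDiff ℝ (⊤ : ℕ∞) (fun p : E3 => lam p.1 p.2.1) := hl.comp contDiff_proj12
  exact ((Real.contDiff_exp.comp hlam).mul (contDiff_pd hu e3)).mul
    (((Real.contDiff_sin.comp contDiff_proj3).mul (contDiff_Xp3 hl hu)).sub
      ((Real.contDiff_cos.comp contDiff_proj3).mul (contDiff_Xg3 hl hu)))

lemma contDiff_CC : ContDiff ℝ (⊤ : ℕ∞) (CC lam u) := by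
  unfold CC
  have hlam : ContDiff ℝ (⊤ : ℕ∞) (fun p : E3 => lam p.1 p.2.1) := hl.comp contDiff_proj12
  exact (((Real.contDiff_exp.comp hlam).mul (contDiff_pd hu e3)).mul
    ((((Real.contDiff_sin.comp contDiff_proj3).neg.mul
        ((contDiff_pd hl f1).comp contDiff_proj12)).add
      ((Real.contDiff_cos.comp contDiff_proj3).mul
        ((contDiff_pd hl f2).comp contDiff_proj12))).mul (contDiff_Xp3 hl hu) |>.add
      ((((Real.contDiff_cos.comp contDiff_proj3).mul
          ((contDiff_pd hl f1).comp contDiff_proj12)).add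
        ((Real.contDiff_sin.comp contDiff_proj3).mul
          ((contDiff_pd hl f2).comp contDiff_proj12))).mul (contDiff_Xg3 hl hu)))).add
    (((Real.contDiff_exp.comp hlam).mul (Real.contDiff_exp.comp hlam)).mul
      ((contDiff_Xp3 hl hu).mul (contDiff_Xg3 hl hu)))

end Smooth

end Fields

end PestovProof
namespace PestovProof

section SuppPer

variable {lam : ℝ → ℝ → ℝ} {u : ℝ → ℝ → ℝ → ℝ}
variable {K : Set (ℝ × ℝ)}

/-- complement region -/
def Sc (K : Set (ℝ × ℝ)) : Set E3 := {p : E3 | (p.1, p.2.1) ∉ K}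

lemma isOpen_Sc (hK : IsCompact K) : IsOpen (Sc K) := by
  have : Sc K = (fun p : E3 => (p.1, p.2.1)) ⁻¹' Kᶜ := rfl
  rw [this]
  exact hK.isClosed.isOpen_compl.preimage (by fun_prop)

lemma UU_zero (hsupp : ∀ x y θ : ℝ, (x, y) ∉ K → u x y θ = 0) :
    ∀ p ∈ Sc K, UU u p = 0 := fun p hp => hsupp p.1 p.2.1 p.2.2 hp

lemma pdU_zero (hK : IsCompact K) (hsupp : ∀ x y θ : ℝ, (x, y) ∉ K → u x y θ = 0)
    (v : E3) : ∀ p ∈ Sc K, pd (UU u) v p = 0 := fun p hp =>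
  pd_zero_of_locally_zero (isOpen_Sc hK) (UU_zero hsupp) hp v

lemma Xg3_zero (hK : IsCompact K) (hsupp : ∀ x y θ : ℝ, (x, y) ∉ K → u x y θ = 0) :
    ∀ p ∈ Sc K, Xg3 lam u p = 0 := by
  intro p hp
  unfold Xg3
  rw [pdU_zero hK hsupp e1 p hp, pdU_zero hK hsupp e2 p hp, pdU_zero hK hsupp e3 p hp]
  ring

lemma AA_zero (hK : IsCompact K) (hsupp : ∀ x y θ : ℝ, (x, y) ∉ K → u x y θ = 0) :
    ∀ p : E3, (p.1, p.2.1) ∉ K → AA lam u p = 0 := by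
  intro p hp
  unfold AA
  rw [pdU_zero hK hsupp e3 p hp]
  ring

lemma BB_zero (hK : IsCompact K) (hsupp : ∀ x y θ : ℝ, (x, y) ∉ K → u x y θ = 0) :
    ∀ p : E3, (p.1, p.2.1) ∉ K → BB lam u p = 0 := by
  intro p hp
  unfold BB
  rw [pdU_zero hK hsupp e3 p hp]
  ring

lemma CC_zero (hK : IsCompact K) (hsupp : ∀ x y θ : ℝ, (x, y) ∉ K → u x y θ = 0) :
    ∀ p : E3, (p.1, p.2.1) ∉ K → CC lam u p = 0 := by
  intro p hp
  unfold CC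
  rw [pdU_zero hK hsupp e3 p hp, Xg3_zero hK hsupp p hp]
  ring

section Per

variable (hu : ContDiff ℝ (⊤ : ℕ∞) (UU u))
variable (hper : ∀ x y θ : ℝ, u x y (θ + 2 * Real.pi) = u x y θ)
include hu hper

lemma per_e1 (x y θ : ℝ) :
    pd (UU u) e1 (x, y, θ + 2 * Real.pi) = pd (UU u) e1 (x, y, θ) := by
  rw [← pdx_eq hu, ← pdx_eq hu]
  unfold pdx
  congr 1
  funext x'
  exact hper x' y θ

lemma per_e2 (x y θ : ℝ) :
    pd (UU u) e2 (x, y, θ + 2 * Real.pi) = pd (UU u) e2 (x, y, θ) := by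
  rw [← pdy_eq hu, ← pdy_eq hu]
  unfold pdy
  congr 1
  funext y'
  exact hper x y' θ

lemma per_e3 (x y θ : ℝ) :
    pd (UU u) e3 (x, y, θ + 2 * Real.pi) = pd (UU u) e3 (x, y, θ) := by
  rw [← pdθ_eq hu, ← pdθ_eq hu]
  unfold pdθ
  rw [← deriv_comp_add_const (fun θ' => u x y θ') (2 * Real.pi) θ]
  congr 1
  funext t
  exact hper x y t

lemma Xg3_per (x y θ : ℝ) :
    Xg3 lam u (x, y, θ + 2 * Real.pi) = Xg3 lam u (x, y, θ) := by
  unfold Xg3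
  simp only [per_e1 hu hper, per_e2 hu hper, per_e3 hu hper,
    Real.cos_add_two_pi, Real.sin_add_two_pi]

lemma Xp3_per (x y θ : ℝ) :
    Xp3 lam u (x, y, θ + 2 * Real.pi) = Xp3 lam u (x, y, θ) := by
  unfold Xp3
  simp only [per_e1 hu hper, per_e2 hu hper, per_e3 hu hper,
    Real.cos_add_two_pi, Real.sin_add_two_pi]

lemma CC_per (x y θ : ℝ) :
    CC lam u (x, y, θ + 2 * Real.pi) = CC lam u (x, y, θ) := by
  unfold CC
  simp only [per_e3 hu hper, Xg3_per hu hper, Xp3_per hu hper,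
    Real.cos_add_two_pi, Real.sin_add_two_pi]

end Per

end SuppPer

end PestovProof
namespace PestovProof

section Key

variable {lam : ℝ → ℝ → ℝ} {u : ℝ → ℝ → ℝ → ℝ}
variable (hl : ContDiff ℝ (⊤ : ℕ∞) (LL lam)) (hu : ContDiff ℝ (⊤ : ℕ∞) (UU u))
include hl hu

lemma Xgeo_eq (x y θ : ℝ) : Xgeo lam u x y θ = Xg3 lam u (x, y, θ) := by
  unfold Xgeo Xg3
  rw [pdx_eq hu, pdy_eq hu, pdθ_eq hu, lamx_eq hl, lamy_eq hl]

omit hl in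
lemma pdVx (x y θ : ℝ) :
    pdx (Vvert u) x y θ = pd (pd (UU u) e1) e3 (x, y, θ) := by
  unfold pdx Vvert
  have h : (fun x' => pdθ u x' y θ) = fun x' => pd (UU u) e3 (x', y, θ) :=
    funext fun x' => pdθ_eq hu x' y θ
  rw [h, (hasDerivAt_slice (contDiff_pd hu e3) (curve_x x y θ)).deriv, pd_comm hu e3 e1]

omit hl in
lemma pdVy (x y θ : ℝ) :
    pdy (Vvert u) x y θ = pd (pd (UU u) e2) e3 (x, y, θ) := by
  unfold pdy Vvert
  have h : (fun y' => pdθ u x y' θ) = fun y' => pd (UU u) e3 (x, y', θ) :=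
    funext fun y' => pdθ_eq hu x y' θ
  rw [h, (hasDerivAt_slice (contDiff_pd hu e3) (curve_y x y θ)).deriv, pd_comm hu e3 e2]

omit hl in
lemma pdVθ (x y θ : ℝ) :
    pdθ (Vvert u) x y θ = pd (pd (UU u) e3) e3 (x, y, θ) := by
  unfold pdθ Vvert
  have h : (fun θ' => pdθ u x y θ') = fun θ' => pd (UU u) e3 (x, y, θ') :=
    funext fun θ' => pdθ_eq hu x y θ'
  rw [h, (hasDerivAt_slice (contDiff_pd hu e3) (curve_θ x y θ)).deriv]

lemma key (x y θ : ℝ) :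
    (Vvert (Xgeo lam u) x y θ) ^ 2 * Real.exp (2 * lam x y)
      - (Xgeo lam (Vvert u) x y θ) ^ 2 * Real.exp (2 * lam x y)
      + gaussCurv lam x y * (Vvert u x y θ) ^ 2 * Real.exp (2 * lam x y)
      - (Xgeo lam u x y θ) ^ 2 * Real.exp (2 * lam x y)
    = deriv (fun t => AA lam u (t, y, θ)) x + deriv (fun t => BB lam u (x, t, θ)) y
      + deriv (fun t => CC lam u (x, y, t)) θ := by
  -- leaves, x-direction
  have hlx : HasDerivAt (fun t => lam t y) (pd (LL lam) f1 (x, y)) x :=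
    hasDerivAt_slice hl (curve2_x x y)
  have hex := hlx.exp
  have hemx := hlx.neg.exp
  have hu1x : HasDerivAt (fun t => pd (UU u) e1 (t, y, θ)) (pd (pd (UU u) e1) e1 (x, y, θ)) x :=
    hasDerivAt_slice (contDiff_pd hu e1) (curve_x x y θ)
  have hu2x : HasDerivAt (fun t => pd (UU u) e2 (t, y, θ)) (pd (pd (UU u) e2) e1 (x, y, θ)) x :=
    hasDerivAt_slice (contDiff_pd hu e2) (curve_x x y θ)
  have hu3x : HasDerivAt (fun t => pd (UU u) e3 (t, y, θ)) (pd (pd (UU u) e3) e1 (x, y, θ)) x :=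
    hasDerivAt_slice (contDiff_pd hu e3) (curve_x x y θ)
  have hl1x : HasDerivAt (fun t => pd (LL lam) f1 (t, y)) (pd (pd (LL lam) f1) f1 (x, y)) x :=
    hasDerivAt_slice (contDiff_pd hl f1) (curve2_x x y)
  have hl2x : HasDerivAt (fun t => pd (LL lam) f2 (t, y)) (pd (pd (LL lam) f2) f1 (x, y)) x :=
    hasDerivAt_slice (contDiff_pd hl f2) (curve2_x x y)
  -- leaves, y-direction
  have hly : HasDerivAt (fun t => lam x t) (pd (LL lam) f2 (x, y)) y :=
    hasDerivAt_slice hl (curve2_y x y)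
  have hey := hly.exp
  have hemy := hly.neg.exp
  have hu1y : HasDerivAt (fun t => pd (UU u) e1 (x, t, θ)) (pd (pd (UU u) e1) e2 (x, y, θ)) y :=
    hasDerivAt_slice (contDiff_pd hu e1) (curve_y x y θ)
  have hu2y : HasDerivAt (fun t => pd (UU u) e2 (x, t, θ)) (pd (pd (UU u) e2) e2 (x, y, θ)) y :=
    hasDerivAt_slice (contDiff_pd hu e2) (curve_y x y θ)
  have hu3y : HasDerivAt (fun t => pd (UU u) e3 (x, t, θ)) (pd (pd (UU u) e3) e2 (x, y, θ)) y :=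
    hasDerivAt_slice (contDiff_pd hu e3) (curve_y x y θ)
  have hl1y : HasDerivAt (fun t => pd (LL lam) f1 (x, t)) (pd (pd (LL lam) f1) f2 (x, y)) y :=
    hasDerivAt_slice (contDiff_pd hl f1) (curve2_y x y)
  have hl2y : HasDerivAt (fun t => pd (LL lam) f2 (x, t)) (pd (pd (LL lam) f2) f2 (x, y)) y :=
    hasDerivAt_slice (contDiff_pd hl f2) (curve2_y x y)
  -- leaves, θ-direction
  have hu1θ : HasDerivAt (fun t => pd (UU u) e1 (x, y, t)) (pd (pd (UU u) e1) e3 (x, y, θ)) θ :=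
    hasDerivAt_slice (contDiff_pd hu e1) (curve_θ x y θ)
  have hu2θ : HasDerivAt (fun t => pd (UU u) e2 (x, y, t)) (pd (pd (UU u) e2) e3 (x, y, θ)) θ :=
    hasDerivAt_slice (contDiff_pd hu e2) (curve_θ x y θ)
  have hu3θ : HasDerivAt (fun t => pd (UU u) e3 (x, y, t)) (pd (pd (UU u) e3) e3 (x, y, θ)) θ :=
    hasDerivAt_slice (contDiff_pd hu e3) (curve_θ x y θ)
  -- θ-slices of the two fields
  have hXgθ : HasDerivAt (fun t => Xg3 lam u (x, y, t)) _ θ :=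
    ((((Real.hasDerivAt_cos θ).mul hu1θ).add ((Real.hasDerivAt_sin θ).mul hu2θ)).add
      ((((Real.hasDerivAt_sin θ).neg.mul_const (pd (LL lam) f1 (x, y))).add
        ((Real.hasDerivAt_cos θ).mul_const (pd (LL lam) f2 (x, y)))).mul hu3θ)).const_mul
      (Real.exp (-(lam x y)))
  have hXpθ : HasDerivAt (fun t => Xp3 lam u (x, y, t)) _ θ :=
    ((((Real.hasDerivAt_sin θ).neg.mul hu1θ).add ((Real.hasDerivAt_cos θ).mul hu2θ)).sub
      ((((Real.hasDerivAt_cos θ).mul_const (pd (LL lam) f1 (x, y))).add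
        ((Real.hasDerivAt_sin θ).mul_const (pd (LL lam) f2 (x, y)))).mul hu3θ)).const_mul
      (Real.exp (-(lam x y)))
  -- x-slices of the two fields
  have hXgx : HasDerivAt (fun t => Xg3 lam u (t, y, θ)) _ x :=
    hemx.mul (((hu1x.const_mul (Real.cos θ)).add (hu2x.const_mul (Real.sin θ))).add
      (((hl1x.const_mul (-Real.sin θ)).add (hl2x.const_mul (Real.cos θ))).mul hu3x))
  have hXpx : HasDerivAt (fun t => Xp3 lam u (t, y, θ)) _ x :=
    hemx.mul (((hu1x.const_mul (-Real.sin θ)).add (hu2x.const_mul (Real.cos θ))).sub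
      (((hl1x.const_mul (Real.cos θ)).add (hl2x.const_mul (Real.sin θ))).mul hu3x))
  -- y-slices of the two fields
  have hXgy : HasDerivAt (fun t => Xg3 lam u (x, t, θ)) _ y :=
    hemy.mul (((hu1y.const_mul (Real.cos θ)).add (hu2y.const_mul (Real.sin θ))).add
      (((hl1y.const_mul (-Real.sin θ)).add (hl2y.const_mul (Real.cos θ))).mul hu3y))
  have hXpy : HasDerivAt (fun t => Xp3 lam u (x, t, θ)) _ y :=
    hemy.mul (((hu1y.const_mul (-Real.sin θ)).add (hu2y.const_mul (Real.cos θ))).sub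
      (((hl1y.const_mul (Real.cos θ)).add (hl2y.const_mul (Real.sin θ))).mul hu3y))
  -- derivative of AA in x, BB in y, CC in θ
  have hA : HasDerivAt (fun t => AA lam u (t, y, θ)) _ x :=
    (hex.mul hu3x).mul ((hXpx.const_mul (Real.cos θ)).add (hXgx.const_mul (Real.sin θ)))
  have hB : HasDerivAt (fun t => BB lam u (x, t, θ)) _ y :=
    (hey.mul hu3y).mul ((hXpy.const_mul (Real.sin θ)).sub (hXgy.const_mul (Real.cos θ)))
  have hC : HasDerivAt (fun t => CC lam u (x, y, t)) _ θ :=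
    ((hu3θ.const_mul (Real.exp (lam x y))).mul
      (((((Real.hasDerivAt_sin θ).neg.mul_const (pd (LL lam) f1 (x, y))).add
          ((Real.hasDerivAt_cos θ).mul_const (pd (LL lam) f2 (x, y)))).mul hXpθ).add
        (((((Real.hasDerivAt_cos θ).mul_const (pd (LL lam) f1 (x, y))).add
          ((Real.hasDerivAt_sin θ).mul_const (pd (LL lam) f2 (x, y)))).mul hXgθ)))).add
      ((hXpθ.mul hXgθ).const_mul (Real.exp (lam x y) * Real.exp (lam x y)))
  -- rewrite all pieces of the goal
  have h1 : Vvert (Xgeo lam u) x y θ = deriv (fun t => Xg3 lam u (x, y, t)) θ := by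
    show deriv (fun t => Xgeo lam u x y t) θ = _
    congr 1
    funext t
    exact Xgeo_eq hl hu x y t
  have hXVu : Xgeo lam (Vvert u) x y θ =
      Real.exp (-(lam x y)) *
        (Real.cos θ * pd (pd (UU u) e1) e3 (x, y, θ) +
          Real.sin θ * pd (pd (UU u) e2) e3 (x, y, θ) +
          (-Real.sin θ * pd (LL lam) f1 (x, y) + Real.cos θ * pd (LL lam) f2 (x, y)) *
            pd (pd (UU u) e3) e3 (x, y, θ)) := by
    unfold Xgeo
    rw [pdVx hu, pdVy hu, pdVθ hu, lamx_eq hl, lamy_eq hl]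
  have hGC : gaussCurv lam x y =
      -Real.exp (-(2 * lam x y)) *
        (pd (pd (LL lam) f1) f1 (x, y) + pd (pd (LL lam) f2) f2 (x, y)) := by
    unfold gaussCurv
    have i1 : (fun x' => deriv (fun x'' => lam x'' y) x') = fun x' => pd (LL lam) f1 (x', y) :=
      funext fun x' => lamx_eq hl x' y
    have i2 : (fun y' => deriv (fun y'' => lam x y'') y') = fun y' => pd (LL lam) f2 (x, y') :=
      funext fun y' => lamy_eq hl x y'
    rw [i1, i2, (hasDerivAt_slice (contDiff_pd hl f1) (curve2_x x y)).deriv,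
      (hasDerivAt_slice (contDiff_pd hl f2) (curve2_y x y)).deriv]
  have hVu : Vvert u x y θ = pd (UU u) e3 (x, y, θ) := pdθ_eq hu x y θ
  have hXu : Xgeo lam u x y θ =
      Real.exp (-(lam x y)) *
        (Real.cos θ * pd (UU u) e1 (x, y, θ) + Real.sin θ * pd (UU u) e2 (x, y, θ) +
          (-Real.sin θ * pd (LL lam) f1 (x, y) + Real.cos θ * pd (LL lam) f2 (x, y)) *
            pd (UU u) e3 (x, y, θ)) := by
    unfold Xgeo
    rw [pdx_eq hu, pdy_eq hu, pdθ_eq hu, lamx_eq hl, lamy_eq hl]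
  rw [h1, hXgθ.deriv, hXVu, hGC, hVu, hXu, hA.deriv, hB.deriv, hC.deriv]
  simp only [Xg3, Xp3]
  simp only [Pi.add_apply, Pi.mul_apply, Pi.neg_apply, Pi.sub_apply]
  simp only [pd_comm hu e2 e1, pd_comm hu e3 e1, pd_comm hu e3 e2, pd_comm hl f2 f1]
  have hE2 : Real.exp (2 * lam x y) = Real.exp (lam x y) * Real.exp (lam x y) := by
    rw [two_mul, Real.exp_add]
  have hEm2 : Real.exp (-(2 * lam x y)) = Real.exp (-(lam x y)) * Real.exp (-(lam x y)) := by
    rw [two_mul, neg_add, Real.exp_add]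
  rw [hE2, hEm2]
  have hEEm : Real.exp (lam x y) * Real.exp (-(lam x y)) = 1 := by
    rw [← Real.exp_add]; simp
  have hsc : Real.sin θ ^ 2 + Real.cos θ ^ 2 = 1 := Real.sin_sq_add_cos_sq θ
  linear_combination
    ((-1 : ℝ) * (pd (pd (LL lam) f2) f2 (x, y)) * (pd (UU u) e3 (x, y, θ))^2 + (-1 : ℝ) * (pd (pd (LL lam) f1) f1 (x, y)) * (pd (UU u) e3 (x, y, θ))^2 + (Real.sin θ)^2 * (pd (pd (LL lam) f2) f2 (x, y)) * (pd (UU u) e3 (x, y, θ))^2 + (Real.sin θ)^2 * (pd (pd (LL lam) f1) f1 (x, y)) * (pd (UU u) e3 (x, y, θ))^2 + (Real.cos θ)^2 * (pd (pd (LL lam) f2) f2 (x, y)) * (pd (UU u) e3 (x, y, θ))^2 + (Real.cos θ)^2 * (pd (pd (LL lam) f1) f1 (x, y)) * (pd (UU u) e3 (x, y, θ))^2 + (-1 : ℝ) * (Real.exp (lam x y)) * (Real.exp (-(lam x y))) * (pd (pd (LL lam) f2) f2 (x, y)) * (pd (UU u) e3 (x, y, θ))^2 + (-1 : ℝ) *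 (Real.exp (lam x y)) * (Real.exp (-(lam x y))) * (pd (pd (LL lam) f1) f1 (x, y)) * (pd (UU u) e3 (x, y, θ))^2 + (Real.exp (lam x y)) * (Real.exp (-(lam x y))) * (Real.sin θ)^2 * (pd (UU u) e2 (x, y, θ)) * (pd (pd (UU u) e1) e3 (x, y, θ)) + (-1 : ℝ) * (Real.exp (lam x y)) * (Real.exp (-(lam x y))) * (Real.sin θ)^2 * (pd (UU u) e1 (x, y, θ)) * (pd (pd (UU u) e2) e3 (x, y, θ)) + (-1 : ℝ) * (Real.exp (lam x y)) * (Real.exp (-(lam x y))) * (Real.sin θ)^2 * (pd (LL lam) f2 (x, y)) * (pd (UU u) e3 (x, y, θ)) * (pd (pd (UU u) e2) e3 (x, y, θ)) + (Real.exp (lam x y)) * (Real.exp (-(lam x y))) * (Real.sin θ)^2 * (pd (LL lam) f2 (x, y)) * (pd (UU u) e2 (x, y, θ)) * (pd (pd (UU u) e3) e3 (x, y, θ)) + (-1 : ℝ) * (Real.exp (lam x y)) * (Real.exp (-(lam x y))) * (Real.sin θ)^2 * (pd (LL lam) f1 (x, y)) * (pd (UU u) e3 (x, y, θ)) * (pd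 (pd (UU u) e1) e3 (x, y, θ)) + (Real.exp (lam x y)) * (Real.exp (-(lam x y))) * (Real.sin θ)^2 * (pd (LL lam) f1 (x, y)) * (pd (UU u) e1 (x, y, θ)) * (pd (pd (UU u) e3) e3 (x, y, θ)) + (Real.exp (lam x y)) * (Real.exp (-(lam x y))) * (Real.cos θ)^2 * (pd (UU u) e2 (x, y, θ)) * (pd (pd (UU u) e1) e3 (x, y, θ)) + (-1 : ℝ) * (Real.exp (lam x y)) * (Real.exp (-(lam x y))) * (Real.cos θ)^2 * (pd (UU u) e1 (x, y, θ)) * (pd (pd (UU u) e2) e3 (x, y, θ)) + (-1 : ℝ) * (Real.exp (lam x y)) * (Real.exp (-(lam x y))) * (Real.cos θ)^2 * (pd (LL lam) f2 (x, y)) * (pd (UU u) e3 (x, y, θ)) * (pd (pd (UU u) e2) e3 (x, y, θ)) + (Real.exp (lam x y)) * (Real.exp (-(lam x y))) * (Real.cos θ)^2 * (pd (LL lam) f2 (x, y)) * (pd (UU u) e2 (x, y, θ)) * (pd (pd (UU u) e3) e3 (x, y, θ)) + (-1 : ℝ) * (Real.exp (lam x y)) * (Real.exp (-(lam x y))) *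 (Real.cos θ)^2 * (pd (LL lam) f1 (x, y)) * (pd (UU u) e3 (x, y, θ)) * (pd (pd (UU u) e1) e3 (x, y, θ)) + (Real.exp (lam x y)) * (Real.exp (-(lam x y))) * (Real.cos θ)^2 * (pd (LL lam) f1 (x, y)) * (pd (UU u) e1 (x, y, θ)) * (pd (pd (UU u) e3) e3 (x, y, θ))) * hEEm
    + ((pd (pd (LL lam) f2) f2 (x, y)) * (pd (UU u) e3 (x, y, θ))^2 + (pd (pd (LL lam) f1) f1 (x, y)) * (pd (UU u) e3 (x, y, θ))^2) * hsc

end Key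

end PestovProof
namespace PestovProof

open MeasureTheory intervalIntegral

section Divergence

variable {F : E3 → ℝ} {K : Set (ℝ × ℝ)}

lemma deriv_slice_x (hF : ContDiff ℝ (⊤ : ℕ∞) F) (x y θ : ℝ) :
    deriv (fun t => F (t, y, θ)) x = pd F e1 (x, y, θ) :=
  (hasDerivAt_slice hF (curve_x x y θ)).deriv

lemma deriv_slice_y (hF : ContDiff ℝ (⊤ : ℕ∞) F) (x y θ : ℝ) :
    deriv (fun t => F (x, t, θ)) y = pd F e2 (x, y, θ) :=
  (hasDerivAt_slice hF (curve_y x y θ)).deriv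

lemma deriv_slice_θ (hF : ContDiff ℝ (⊤ : ℕ∞) F) (x y θ : ℝ) :
    deriv (fun t => F (x, y, t)) θ = pd F e3 (x, y, θ) :=
  (hasDerivAt_slice hF (curve_θ x y θ)).deriv

lemma pdF_zero (hK : IsCompact K) (h0 : ∀ p : E3, (p.1, p.2.1) ∉ K → F p = 0) (v : E3) :
    ∀ p : E3, (p.1, p.2.1) ∉ K → pd F v p = 0 := fun p hp =>
  pd_zero_of_locally_zero (isOpen_Sc hK) (fun q hq => h0 q hq) hp v

lemma notmem_of_abs_fst (hK : IsCompact K) {r : ℝ} (hr : K ⊆ Metric.closedBall 0 r)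
    {x y : ℝ} (hx : r < |x|) : (x, y) ∉ K := by
  intro hmem
  have h1 := hr hmem
  rw [Metric.mem_closedBall, dist_zero_right] at h1
  have h2 : |x| ≤ ‖((x, y) : ℝ × ℝ)‖ := by
    simpa [Real.norm_eq_abs] using norm_fst_le ((x, y) : ℝ × ℝ)
  linarith

lemma notmem_of_abs_snd (hK : IsCompact K) {r : ℝ} (hr : K ⊆ Metric.closedBall 0 r)
    {x y : ℝ} (hy : r < |y|) : (x, y) ∉ K := by
  intro hmem
  have h1 := hr hmem
  rw [Metric.mem_closedBall, dist_zero_right] at h1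
  have h2 : |y| ≤ ‖((x, y) : ℝ × ℝ)‖ := by
    simpa [Real.norm_eq_abs] using norm_snd_le ((x, y) : ℝ × ℝ)
  linarith

lemma integral_pd_x_zero (hF : ContDiff ℝ (⊤ : ℕ∞) F) (hK : IsCompact K)
    (h0 : ∀ p : E3, (p.1, p.2.1) ∉ K → F p = 0) (y θ : ℝ) :
    (∫ x : ℝ, pd F e1 (x, y, θ)) = 0 := by
  obtain ⟨r, hr⟩ := hK.isBounded.subset_closedBall 0
  set R : ℝ := |r| + 1 with hRdef
  have hrR : r < R := by
    have := le_abs_self r; simp only [hRdef]; linarith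
  have hR0 : 0 < R := by positivity
  have hout : ∀ x : ℝ, R ≤ |x| → (x, y) ∉ K := fun x hx =>
    notmem_of_abs_fst hK hr (lt_of_lt_of_le hrR hx)
  have hzero : ∀ x : ℝ, x ∉ Set.Ioc (-R) R → pd F e1 (x, y, θ) = 0 := by
    intro x hx
    refine pdF_zero hK h0 e1 (x, y, θ) ?_
    refine hout x ?_
    have hx' : -R < x → R < x := by simpa [Set.mem_Ioc] using hx
    rcases le_or_gt x (-R) with h | h
    · calc R ≤ -x := by linarith
        _ ≤ |x| := neg_le_abs x
    · exact le_trans (hx' h).le (le_abs_self x)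
  have hsupp' : Function.support (fun x => pd F e1 (x, y, θ)) ⊆ Set.Ioc (-R) R := by
    intro x hx
    by_contra hmem
    exact hx (hzero x hmem)
  rw [← intervalIntegral.integral_eq_integral_of_support_subset hsupp']
  have heq : ∀ x : ℝ, HasDerivAt (fun t => F (t, y, θ)) (pd F e1 (x, y, θ)) x := fun x =>
    hasDerivAt_slice hF (curve_x x y θ)
  have hfun : (fun x => pd F e1 (x, y, θ)) = deriv (fun t => F (t, y, θ)) :=
    funext fun x => ((heq x).deriv).symm
  rw [hfun, intervalIntegral.integral_deriv_eq_sub (fun x _ => (heq x).differentiableAt)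
    (by rw [← hfun]
        exact ((continuous_pd hF e1).comp (by fun_prop)).intervalIntegrable _ _)]
  rw [h0 (R, y, θ) (hout R (by rw [abs_of_pos hR0])),
    h0 (-R, y, θ) (hout (-R) (by rw [abs_neg, abs_of_pos hR0])), sub_zero]

lemma integral_pd_y_zero (hF : ContDiff ℝ (⊤ : ℕ∞) F) (hK : IsCompact K)
    (h0 : ∀ p : E3, (p.1, p.2.1) ∉ K → F p = 0) (x θ : ℝ) :
    (∫ y : ℝ, pd F e2 (x, y, θ)) = 0 := by
  obtain ⟨r, hr⟩ := hK.isBounded.subset_closedBall 0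
  set R : ℝ := |r| + 1 with hRdef
  have hrR : r < R := by
    have := le_abs_self r; simp only [hRdef]; linarith
  have hR0 : 0 < R := by positivity
  have hout : ∀ y : ℝ, R ≤ |y| → (x, y) ∉ K := fun y hy =>
    notmem_of_abs_snd hK hr (lt_of_lt_of_le hrR hy)
  have hzero : ∀ y : ℝ, y ∉ Set.Ioc (-R) R → pd F e2 (x, y, θ) = 0 := by
    intro y hy
    refine pdF_zero hK h0 e2 (x, y, θ) ?_
    refine hout y ?_
    have hy' : -R < y → R < y := by simpa [Set.mem_Ioc] using hy
    rcases le_or_gt y (-R) with h | h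
    · calc R ≤ -y := by linarith
        _ ≤ |y| := neg_le_abs y
    · exact le_trans (hy' h).le (le_abs_self y)
  have hsupp' : Function.support (fun y => pd F e2 (x, y, θ)) ⊆ Set.Ioc (-R) R := by
    intro y hy
    by_contra hmem
    exact hy (hzero y hmem)
  rw [← intervalIntegral.integral_eq_integral_of_support_subset hsupp']
  have heq : ∀ y : ℝ, HasDerivAt (fun t => F (x, t, θ)) (pd F e2 (x, y, θ)) y := fun y =>
    hasDerivAt_slice hF (curve_y x y θ)
  have hfun : (fun y => pd F e2 (x, y, θ)) = deriv (fun t => F (x, t, θ)) :=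
    funext fun y => ((heq y).deriv).symm
  rw [hfun, intervalIntegral.integral_deriv_eq_sub (fun y _ => (heq y).differentiableAt)
    (by rw [← hfun]
        exact ((continuous_pd hF e2).comp (by fun_prop)).intervalIntegrable _ _)]
  rw [h0 (x, R, θ) (hout R (by rw [abs_of_pos hR0])),
    h0 (x, -R, θ) (hout (-R) (by rw [abs_neg, abs_of_pos hR0])), sub_zero]

end Divergence

end PestovProof
namespace PestovProof

open MeasureTheory intervalIntegral

section Divergence2

variable {F : E3 → ℝ} {K : Set (ℝ × ℝ)}

/-- Integrability of a continuous function on `ℝ²` vanishing outside a compact set. -/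
lemma integrable_plane {g : ℝ × ℝ → ℝ} (hg : Continuous g) (hK : IsCompact K)
    (h0 : ∀ p : ℝ × ℝ, p ∉ K → g p = 0) : Integrable g :=
  hg.integrable_of_hasCompactSupport (HasCompactSupport.intro hK h0)

lemma integral2_pd_x_zero (hF : ContDiff ℝ (⊤ : ℕ∞) F) (hK : IsCompact K)
    (h0 : ∀ p : E3, (p.1, p.2.1) ∉ K → F p = 0) (θ : ℝ) :
    (∫ p : ℝ × ℝ, pd F e1 (p.1, p.2, θ)) = 0 := by
  have hint : Integrable (fun p : ℝ × ℝ => pd F e1 (p.1, p.2, θ)) :=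
    integrable_plane ((continuous_pd hF e1).comp (by fun_prop)) hK
      (fun p hp => pdF_zero hK h0 e1 (p.1, p.2, θ) (by simpa using hp))
  rw [MeasureTheory.Measure.volume_eq_prod] at hint ⊢
  rw [MeasureTheory.integral_prod _ hint]
  rw [MeasureTheory.integral_integral_swap (by exact hint)]
  simp only [integral_pd_x_zero hF hK h0]
  simp

lemma integral2_pd_y_zero (hF : ContDiff ℝ (⊤ : ℕ∞) F) (hK : IsCompact K)
    (h0 : ∀ p : E3, (p.1, p.2.1) ∉ K → F p = 0) (θ : ℝ) :
    (∫ p : ℝ × ℝ, pd F e2 (p.1, p.2, θ)) = 0 := by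
  have hint : Integrable (fun p : ℝ × ℝ => pd F e2 (p.1, p.2, θ)) :=
    integrable_plane ((continuous_pd hF e2).comp (by fun_prop)) hK
      (fun p hp => pdF_zero hK h0 e2 (p.1, p.2, θ) (by simpa using hp))
  rw [MeasureTheory.Measure.volume_eq_prod] at hint ⊢
  rw [MeasureTheory.integral_prod _ hint]
  simp only [integral_pd_y_zero hF hK h0]
  simp

/-- Integrability on `(restrict Ioc).prod volume` of continuous functions supported
in the compact set `K` in the plane variable. -/
lemma integrable_restrict_prod {g : ℝ × (ℝ × ℝ) → ℝ} (hg : Continuous g) (hK : IsCompact K)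
    (h0 : ∀ z : ℝ × (ℝ × ℝ), z.2 ∉ K → g z = 0) (a b : ℝ) :
    Integrable g ((volume.restrict (Set.Ioc a b)).prod volume) := by
  have hmeas : (volume.restrict (Set.Ioc a b)).prod (volume : Measure (ℝ × ℝ)) =
      ((volume : Measure ℝ).prod (volume : Measure (ℝ × ℝ))).restrict
        (Set.Ioc a b ×ˢ Set.univ) := by
    rw [← Measure.prod_restrict, Measure.restrict_univ]
  rw [hmeas, ← MeasureTheory.Measure.volume_eq_prod]
  have h1 : IntegrableOn g (Set.Icc a b ×ˢ K) volume :=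
    hg.continuousOn.integrableOn_compact (isCompact_Icc.prod hK)
  have hSmeas : MeasurableSet ((Set.Ioc a b ×ˢ (Set.univ : Set (ℝ × ℝ))) \
      ((Set.univ : Set ℝ) ×ˢ K)) :=
    (measurableSet_Ioc.prod MeasurableSet.univ).diff
      (MeasurableSet.univ.prod hK.isClosed.measurableSet)
  have h2 : IntegrableOn g ((Set.Ioc a b ×ˢ (Set.univ : Set (ℝ × ℝ))) \
      ((Set.univ : Set ℝ) ×ˢ K)) volume := by
    refine (integrableOn_zero (ε' := ℝ)).congr_fun ?_ hSmeas
    intro z hz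
    have : z.2 ∉ K := by
      intro hzK
      exact hz.2 ⟨Set.mem_univ _, hzK⟩
    exact ((h0 z this)).symm
  have h3 : IntegrableOn g ((Set.Ioc a b ×ˢ (Set.univ : Set (ℝ × ℝ))) ∩
      ((Set.univ : Set ℝ) ×ˢ K)) volume := by
    refine h1.mono_set ?_
    rintro ⟨t, p⟩ ⟨⟨ht, -⟩, ⟨-, hp⟩⟩
    exact ⟨⟨ht.1.le, ht.2⟩, hp⟩
  have := h3.union h2
  rwa [Set.inter_union_diff] at this

lemma integral_pdθ_zero (hF : ContDiff ℝ (⊤ : ℕ∞) F) (hK : IsCompact K)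
    (h0 : ∀ p : E3, (p.1, p.2.1) ∉ K → F p = 0)
    (hper : ∀ x y θ : ℝ, F (x, y, θ + 2 * Real.pi) = F (x, y, θ)) :
    (∫ θ in (0:ℝ)..(2 * Real.pi), ∫ p : ℝ × ℝ, pd F e3 (p.1, p.2, θ)) = 0 := by
  have h2π : (0:ℝ) ≤ 2 * Real.pi := by positivity
  have hintg : Integrable (Function.uncurry fun θ (p : ℝ × ℝ) => pd F e3 (p.1, p.2, θ))
      ((volume.restrict (Set.Ioc 0 (2 * Real.pi))).prod volume) := by
    refine integrable_restrict_prod ?_ hK ?_ 0 (2 * Real.pi)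
    · exact (continuous_pd hF e3).comp (by fun_prop)
    · intro z hz
      exact pdF_zero hK h0 e3 (z.2.1, z.2.2, z.1) (by simpa using hz)
  rw [intervalIntegral.integral_of_le h2π]
  rw [MeasureTheory.integral_integral_swap hintg]
  have hin : ∀ p : ℝ × ℝ, (∫ θ in Set.Ioc (0:ℝ) (2 * Real.pi), pd F e3 (p.1, p.2, θ)) = 0 := by
    intro p
    rw [← intervalIntegral.integral_of_le h2π]
    have heq : ∀ t : ℝ, HasDerivAt (fun s => F (p.1, p.2, s)) (pd F e3 (p.1, p.2, t)) t :=
      fun t => hasDerivAt_slice hF (curve_θ p.1 p.2 t)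
    have hfun : (fun t => pd F e3 (p.1, p.2, t)) = deriv (fun s => F (p.1, p.2, s)) :=
      funext fun t => ((heq t).deriv).symm
    rw [hfun, intervalIntegral.integral_deriv_eq_sub (fun t _ => (heq t).differentiableAt)
      (by rw [← hfun]
          exact ((continuous_pd hF e3).comp (by fun_prop)).intervalIntegrable _ _)]
    have := hper p.1 p.2 0
    rw [zero_add] at this
    rw [this, sub_self]
  simp only [hin]
  simp

/-- Continuity in the parameter `θ` of the plane integral. -/
lemma continuous_param_integral {g : ℝ × ℝ → ℝ → ℝ}
    (hg : Continuous fun z : (ℝ × ℝ) × ℝ => g z.1 z.2) (hK : IsCompact K)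
    (h0 : ∀ (p : ℝ × ℝ) (θ : ℝ), p ∉ K → g p θ = 0) :
    Continuous (fun θ : ℝ => ∫ p : ℝ × ℝ, g p θ) := by
  rw [continuous_iff_continuousAt]
  intro θ0
  obtain ⟨M, hM⟩ :=
    (hK.prod (isCompact_Icc (a := θ0 - 1) (b := θ0 + 1))).exists_bound_of_continuousOn
      hg.continuousOn
  refine MeasureTheory.continuousAt_of_dominated (bound := Set.indicator K fun _ => M) ?_ ?_ ?_ ?_
  · exact Filter.Eventually.of_forall fun θ =>
      ((hg.comp (by fun_prop : Continuous fun p : ℝ × ℝ => (p, θ))).aestronglyMeasurable)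
  · have hball : ∀ᶠ θ in nhds θ0, θ ∈ Set.Icc (θ0 - 1) (θ0 + 1) := by
      have : Set.Icc (θ0 - 1) (θ0 + 1) ∈ nhds θ0 := by
        apply Icc_mem_nhds <;> linarith
      exact this
    refine hball.mono fun θ hθ => ?_
    refine Filter.Eventually.of_forall fun p => ?_
    by_cases hp : p ∈ K
    · rw [Set.indicator_of_mem hp]
      exact hM (p, θ) ⟨hp, hθ⟩
    · rw [Set.indicator_of_notMem hp, h0 p θ hp]
      simp
  · rw [integrable_indicator_iff hK.isClosed.measurableSet]
    exact integrableOn_const hK.measure_lt_top.ne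
  · exact Filter.Eventually.of_forall fun p =>
      (hg.comp (by fun_prop : Continuous fun θ : ℝ => (p, θ))).continuousAt

end Divergence2

end PestovProof
namespace PestovProof

section AtomForms

variable (lam : ℝ → ℝ → ℝ) (u : ℝ → ℝ → ℝ → ℝ)

/-- `V(Xu)` in atomic form. -/
noncomputable def VX3 : E3 → ℝ := fun p =>
  Real.exp (-(lam p.1 p.2.1)) *
    (-Real.sin p.2.2 * pd (UU u) e1 p + Real.cos p.2.2 * pd (pd (UU u) e1) e3 p +
      Real.cos p.2.2 * pd (UU u) e2 p + Real.sin p.2.2 * pd (pd (UU u) e2) e3 p +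
      (-Real.cos p.2.2 * pd (LL lam) f1 (p.1, p.2.1) -
        Real.sin p.2.2 * pd (LL lam) f2 (p.1, p.2.1)) * pd (UU u) e3 p +
      (-Real.sin p.2.2 * pd (LL lam) f1 (p.1, p.2.1) +
        Real.cos p.2.2 * pd (LL lam) f2 (p.1, p.2.1)) * pd (pd (UU u) e3) e3 p)

/-- `X(Vu)` in atomic form. -/
noncomputable def XV3 : E3 → ℝ := fun p =>
  Real.exp (-(lam p.1 p.2.1)) *
    (Real.cos p.2.2 * pd (pd (UU u) e1) e3 p + Real.sin p.2.2 * pd (pd (UU u) e2) e3 p +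
      (-Real.sin p.2.2 * pd (LL lam) f1 (p.1, p.2.1) +
        Real.cos p.2.2 * pd (LL lam) f2 (p.1, p.2.1)) * pd (pd (UU u) e3) e3 p)

/-- Gauss curvature in atomic form. -/
noncomputable def GC2 : ℝ × ℝ → ℝ := fun q =>
  -Real.exp (-(2 * lam q.1 q.2)) * (pd (pd (LL lam) f1) f1 q + pd (pd (LL lam) f2) f2 q)

variable {lam u}
variable (hl : ContDiff ℝ (⊤ : ℕ∞) (LL lam)) (hu : ContDiff ℝ (⊤ : ℕ∞) (UU u))
include hl hu

lemma VXu_eq (x y θ : ℝ) : Vvert (Xgeo lam u) x y θ = VX3 lam u (x, y, θ) := by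
  have hu1θ : HasDerivAt (fun t => pd (UU u) e1 (x, y, t)) (pd (pd (UU u) e1) e3 (x, y, θ)) θ :=
    hasDerivAt_slice (contDiff_pd hu e1) (curve_θ x y θ)
  have hu2θ : HasDerivAt (fun t => pd (UU u) e2 (x, y, t)) (pd (pd (UU u) e2) e3 (x, y, θ)) θ :=
    hasDerivAt_slice (contDiff_pd hu e2) (curve_θ x y θ)
  have hu3θ : HasDerivAt (fun t => pd (UU u) e3 (x, y, t)) (pd (pd (UU u) e3) e3 (x, y, θ)) θ :=
    hasDerivAt_slice (contDiff_pd hu e3) (curve_θ x y θ)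
  have hXgθ : HasDerivAt (fun t => Xg3 lam u (x, y, t)) _ θ :=
    ((((Real.hasDerivAt_cos θ).mul hu1θ).add ((Real.hasDerivAt_sin θ).mul hu2θ)).add
      ((((Real.hasDerivAt_sin θ).neg.mul_const (pd (LL lam) f1 (x, y))).add
        ((Real.hasDerivAt_cos θ).mul_const (pd (LL lam) f2 (x, y)))).mul hu3θ)).const_mul
      (Real.exp (-(lam x y)))
  have h1 : Vvert (Xgeo lam u) x y θ = deriv (fun t => Xg3 lam u (x, y, t)) θ := by
    show deriv (fun t => Xgeo lam u x y t) θ = _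
    congr 1
    funext t
    exact Xgeo_eq hl hu x y t
  rw [h1, hXgθ.deriv]
  simp only [VX3]
  simp only [Pi.add_apply, Pi.mul_apply, Pi.neg_apply, Pi.sub_apply]
  ring

lemma XVu_eq (x y θ : ℝ) : Xgeo lam (Vvert u) x y θ = XV3 lam u (x, y, θ) := by
  show Xgeo lam (Vvert u) x y θ = _
  unfold Xgeo XV3
  rw [pdVx hu, pdVy hu, pdVθ hu, lamx_eq hl, lamy_eq hl]

omit hu in
lemma gauss_eq (x y : ℝ) : gaussCurv lam x y = GC2 lam (x, y) := by
  unfold gaussCurv GC2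
  have i1 : (fun x' => deriv (fun x'' => lam x'' y) x') = fun x' => pd (LL lam) f1 (x', y) :=
    funext fun x' => lamx_eq hl x' y
  have i2 : (fun y' => deriv (fun y'' => lam x y'') y') = fun y' => pd (LL lam) f2 (x, y') :=
    funext fun y' => lamy_eq hl x y'
  rw [i1, i2, (hasDerivAt_slice (contDiff_pd hl f1) (curve2_x x y)).deriv,
    (hasDerivAt_slice (contDiff_pd hl f2) (curve2_y x y)).deriv]

omit hl in
lemma Vu_eq (x y θ : ℝ) : Vvert u x y θ = pd (UU u) e3 (x, y, θ) := pdθ_eq hu x y θ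

lemma contDiff_VX3 : ContDiff ℝ (⊤ : ℕ∞) (VX3 lam u) := by
  unfold VX3
  have hlam : ContDiff ℝ (⊤ : ℕ∞) (fun p : E3 => lam p.1 p.2.1) := hl.comp contDiff_proj12
  have hc : ContDiff ℝ (⊤ : ℕ∞) (fun p : E3 => Real.cos p.2.2) := Real.contDiff_cos.comp contDiff_proj3
  have hs : ContDiff ℝ (⊤ : ℕ∞) (fun p : E3 => Real.sin p.2.2) := Real.contDiff_sin.comp contDiff_proj3
  have hl1 : ContDiff ℝ (⊤ : ℕ∞) (fun p : E3 => pd (LL lam) f1 (p.1, p.2.1)) :=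
    (contDiff_pd hl f1).comp contDiff_proj12
  have hl2 : ContDiff ℝ (⊤ : ℕ∞) (fun p : E3 => pd (LL lam) f2 (p.1, p.2.1)) :=
    (contDiff_pd hl f2).comp contDiff_proj12
  exact (Real.contDiff_exp.comp hlam.neg).mul
    ((((((hs.neg.mul (contDiff_pd hu e1)).add
      (hc.mul (contDiff_pd (contDiff_pd hu e1) e3))).add
      (hc.mul (contDiff_pd hu e2))).add (hs.mul (contDiff_pd (contDiff_pd hu e2) e3))).add
      (((hc.neg.mul hl1).sub (hs.mul hl2)).mul (contDiff_pd hu e3))).add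
      (((hs.neg.mul hl1).add (hc.mul hl2)).mul (contDiff_pd (contDiff_pd hu e3) e3)))

lemma contDiff_XV3 : ContDiff ℝ (⊤ : ℕ∞) (XV3 lam u) := by
  unfold XV3
  have hlam : ContDiff ℝ (⊤ : ℕ∞) (fun p : E3 => lam p.1 p.2.1) := hl.comp contDiff_proj12
  have hc : ContDiff ℝ (⊤ : ℕ∞) (fun p : E3 => Real.cos p.2.2) := Real.contDiff_cos.comp contDiff_proj3
  have hs : ContDiff ℝ (⊤ : ℕ∞) (fun p : E3 => Real.sin p.2.2) := Real.contDiff_sin.comp contDiff_proj3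
  have hl1 : ContDiff ℝ (⊤ : ℕ∞) (fun p : E3 => pd (LL lam) f1 (p.1, p.2.1)) :=
    (contDiff_pd hl f1).comp contDiff_proj12
  have hl2 : ContDiff ℝ (⊤ : ℕ∞) (fun p : E3 => pd (LL lam) f2 (p.1, p.2.1)) :=
    (contDiff_pd hl f2).comp contDiff_proj12
  exact (Real.contDiff_exp.comp hlam.neg).mul
    (((hc.mul (contDiff_pd (contDiff_pd hu e1) e3)).add
      (hs.mul (contDiff_pd (contDiff_pd hu e2) e3))).add
      (((hs.neg.mul hl1).add (hc.mul hl2)).mul (contDiff_pd (contDiff_pd hu e3) e3)))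

omit hu in
lemma contDiff_GC2 : ContDiff ℝ (⊤ : ℕ∞) (GC2 lam) := by
  unfold GC2
  have hlam : ContDiff ℝ (⊤ : ℕ∞) (fun q : ℝ × ℝ => lam q.1 q.2) := by
    have : (fun q : ℝ × ℝ => lam q.1 q.2) = LL lam := rfl
    rw [this]; exact hl
  exact ((Real.contDiff_exp.comp ((contDiff_const.mul hlam).neg)).neg).mul
    ((contDiff_pd (contDiff_pd hl f1) f1).add (contDiff_pd (contDiff_pd hl f2) f2))

end AtomForms

section AtomSupp

variable {lam : ℝ → ℝ → ℝ} {u : ℝ → ℝ → ℝ → ℝ} {K : Set (ℝ × ℝ)}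
variable (hK : IsCompact K) (hsupp : ∀ x y θ : ℝ, (x, y) ∉ K → u x y θ = 0)
include hK hsupp

lemma pdpdU_zero (v w : E3) : ∀ p ∈ Sc K, pd (pd (UU u) v) w p = 0 := fun p hp =>
  pd_zero_of_locally_zero (isOpen_Sc hK) (pdU_zero hK hsupp v) hp w

lemma VX3_zero : ∀ p ∈ Sc K, VX3 lam u p = 0 := by
  intro p hp
  unfold VX3
  rw [pdU_zero hK hsupp e1 p hp, pdU_zero hK hsupp e2 p hp, pdU_zero hK hsupp e3 p hp,
    pdpdU_zero hK hsupp e1 e3 p hp, pdpdU_zero hK hsupp e2 e3 p hp,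
    pdpdU_zero hK hsupp e3 e3 p hp]
  ring

lemma XV3_zero : ∀ p ∈ Sc K, XV3 lam u p = 0 := by
  intro p hp
  unfold XV3
  rw [pdpdU_zero hK hsupp e1 e3 p hp, pdpdU_zero hK hsupp e2 e3 p hp,
    pdpdU_zero hK hsupp e3 e3 p hp]
  ring

end AtomSupp

end PestovProof
namespace PestovProof

section Key2

variable {lam : ℝ → ℝ → ℝ} {u : ℝ → ℝ → ℝ → ℝ}
variable (hl : ContDiff ℝ (⊤ : ℕ∞) (LL lam)) (hu : ContDiff ℝ (⊤ : ℕ∞) (UU u))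
include hl hu

lemma key2 (x y θ : ℝ) :
    (VX3 lam u (x, y, θ)) ^ 2 * Real.exp (2 * lam x y)
      - (XV3 lam u (x, y, θ)) ^ 2 * Real.exp (2 * lam x y)
      + GC2 lam (x, y) * (pd (UU u) e3 (x, y, θ)) ^ 2 * Real.exp (2 * lam x y)
      - (Xg3 lam u (x, y, θ)) ^ 2 * Real.exp (2 * lam x y)
    = pd (AA lam u) e1 (x, y, θ) + pd (BB lam u) e2 (x, y, θ)
      + pd (CC lam u) e3 (x, y, θ) := by
  have h := key hl hu x y θ
  rw [VXu_eq hl hu, XVu_eq hl hu, gauss_eq hl, Vu_eq hu, Xgeo_eq hl hu,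
    deriv_slice_x (contDiff_AA hl hu), deriv_slice_y (contDiff_BB hl hu),
    deriv_slice_θ (contDiff_CC hl hu)] at h
  exact h

end Key2

end PestovProof


set_option maxHeartbeats 2000000 in
open PestovProof in
/-- **Two-dimensional Pestov identity in isothermal coordinates** (the `n = 2` case of
Lemma 3.2 of the survey): for `u` smooth, `2π`-periodic in `θ` and compactly supported
in the base,
`‖V(Xu)‖² = ‖X(Vu)‖² − (κ Vu, Vu) + ‖Xu‖²` in `L²` of the Liouville measure
`e^{2λ} dx dy dθ`. -/
theorem pestov_identity_isothermal
    (lam : ℝ → ℝ → ℝ) (hlam : ContDiff ℝ (⊤ : ℕ∞) (fun p : ℝ × ℝ => lam p.1 p.2))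
    (u : ℝ → ℝ → ℝ → ℝ)
    (hu : ContDiff ℝ (⊤ : ℕ∞) (fun p : ℝ × ℝ × ℝ => u p.1 p.2.1 p.2.2))
    (hper : ∀ x y θ : ℝ, u x y (θ + 2 * Real.pi) = u x y θ)
    (hsupp : ∃ K : Set (ℝ × ℝ), IsCompact K ∧ ∀ x y θ : ℝ, (x, y) ∉ K → u x y θ = 0) :
    (∫ θ in (0:ℝ)..(2 * Real.pi), ∫ p : ℝ × ℝ,
        (Vvert (Xgeo lam u) p.1 p.2 θ) ^ 2 * Real.exp (2 * lam p.1 p.2)) =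
    (∫ θ in (0:ℝ)..(2 * Real.pi), ∫ p : ℝ × ℝ,
        (Xgeo lam (Vvert u) p.1 p.2 θ) ^ 2 * Real.exp (2 * lam p.1 p.2))
    - (∫ θ in (0:ℝ)..(2 * Real.pi), ∫ p : ℝ × ℝ,
        gaussCurv lam p.1 p.2 * (Vvert u p.1 p.2 θ) ^ 2 * Real.exp (2 * lam p.1 p.2))
    + (∫ θ in (0:ℝ)..(2 * Real.pi), ∫ p : ℝ × ℝ,
        (Xgeo lam u p.1 p.2 θ) ^ 2 * Real.exp (2 * lam p.1 p.2)) := by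
  have hl : ContDiff ℝ (⊤ : ℕ∞) (LL lam) := hlam
  have hu' : ContDiff ℝ (⊤ : ℕ∞) (UU u) := hu
  obtain ⟨K, hK, hs⟩ := hsupp
  have r1 : ∀ a b c : ℝ, Vvert (Xgeo lam u) a b c = VX3 lam u (a, b, c) := VXu_eq hl hu'
  have r2 : ∀ a b c : ℝ, Xgeo lam (Vvert u) a b c = XV3 lam u (a, b, c) := XVu_eq hl hu'
  have r3 : ∀ a b : ℝ, gaussCurv lam a b = GC2 lam (a, b) := gauss_eq hl
  have r4 : ∀ a b c : ℝ, Vvert u a b c = pd (UU u) e3 (a, b, c) := Vu_eq hu'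
  have r5 : ∀ a b c : ℝ, Xgeo lam u a b c = Xg3 lam u (a, b, c) := Xgeo_eq hl hu'
  simp only [r1, r2, r3, r4, r5]
  -- continuity of the basic blocks
  have hproj : Continuous (fun p : ℝ × ℝ => ((p.1, p.2, (0:ℝ)) : E3)) := by fun_prop
  have hce : Continuous (fun q : ℝ × ℝ => Real.exp (2 * lam q.1 q.2)) := by
    have hLc : Continuous (LL lam) := hl.continuous
    exact Real.continuous_exp.comp (continuous_const.mul hLc)
  have hcV : Continuous (VX3 lam u) := (contDiff_VX3 hl hu').continuous
  have hcXV : Continuous (XV3 lam u) := (contDiff_XV3 hl hu').continuous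
  have hcXg : Continuous (Xg3 lam u) := (contDiff_Xg3 hl hu').continuous
  have hcGC : Continuous (GC2 lam) := (contDiff_GC2 hl).continuous
  have hcU3 : Continuous (pd (UU u) e3) := continuous_pd hu' e3
  -- the four integrand families and their integrability
  have hi1 : ∀ θ : ℝ, Integrable
      (fun p : ℝ × ℝ => (VX3 lam u (p.1, p.2, θ)) ^ 2 * Real.exp (2 * lam p.1 p.2)) := by
    intro θ
    refine integrable_plane ?_ hK ?_
    · exact ((hcV.comp (by fun_prop)).pow 2).mul hce
    · intro p hp
      rw [VX3_zero hK hs (p.1, p.2, θ) (by simpa [Sc] using hp)]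
      simp
  have hi2 : ∀ θ : ℝ, Integrable
      (fun p : ℝ × ℝ => (XV3 lam u (p.1, p.2, θ)) ^ 2 * Real.exp (2 * lam p.1 p.2)) := by
    intro θ
    refine integrable_plane ?_ hK ?_
    · exact ((hcXV.comp (by fun_prop)).pow 2).mul hce
    · intro p hp
      rw [XV3_zero hK hs (p.1, p.2, θ) (by simpa [Sc] using hp)]
      simp
  have hi3 : ∀ θ : ℝ, Integrable
      (fun p : ℝ × ℝ => GC2 lam (p.1, p.2) * (pd (UU u) e3 (p.1, p.2, θ)) ^ 2 *
        Real.exp (2 * lam p.1 p.2)) := by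
    intro θ
    refine integrable_plane ?_ hK ?_
    · exact ((hcGC.comp (by fun_prop)).mul ((hcU3.comp (by fun_prop)).pow 2)).mul hce
    · intro p hp
      rw [pdU_zero hK hs e3 (p.1, p.2, θ) (by simpa [Sc] using hp)]
      simp
  have hi4 : ∀ θ : ℝ, Integrable
      (fun p : ℝ × ℝ => (Xg3 lam u (p.1, p.2, θ)) ^ 2 * Real.exp (2 * lam p.1 p.2)) := by
    intro θ
    refine integrable_plane ?_ hK ?_
    · exact ((hcXg.comp (by fun_prop)).pow 2).mul hce
    · intro p hp
      rw [Xg3_zero hK hs (p.1, p.2, θ) (by simpa [Sc] using hp)]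
      simp
  -- integrability of the divergence pieces
  have iAA : ∀ θ : ℝ, Integrable (fun p : ℝ × ℝ => pd (AA lam u) e1 (p.1, p.2, θ)) := fun θ =>
    integrable_plane ((continuous_pd (contDiff_AA hl hu') e1).comp (by fun_prop)) hK
      (fun p hp => pdF_zero hK (AA_zero hK hs) e1 (p.1, p.2, θ) (by simpa using hp))
  have iBB : ∀ θ : ℝ, Integrable (fun p : ℝ × ℝ => pd (BB lam u) e2 (p.1, p.2, θ)) := fun θ =>
    integrable_plane ((continuous_pd (contDiff_BB hl hu') e2).comp (by fun_prop)) hK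
      (fun p hp => pdF_zero hK (BB_zero hK hs) e2 (p.1, p.2, θ) (by simpa using hp))
  have iCC : ∀ θ : ℝ, Integrable (fun p : ℝ × ℝ => pd (CC lam u) e3 (p.1, p.2, θ)) := fun θ =>
    integrable_plane ((continuous_pd (contDiff_CC hl hu') e3).comp (by fun_prop)) hK
      (fun p hp => pdF_zero hK (CC_zero hK hs) e3 (p.1, p.2, θ) (by simpa using hp))
  -- the θ-slice computation
  have hθeq : ∀ θ : ℝ,
      (∫ p : ℝ × ℝ, (VX3 lam u (p.1, p.2, θ)) ^ 2 * Real.exp (2 * lam p.1 p.2))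
        - (∫ p : ℝ × ℝ, (XV3 lam u (p.1, p.2, θ)) ^ 2 * Real.exp (2 * lam p.1 p.2))
        + (∫ p : ℝ × ℝ, GC2 lam (p.1, p.2) * (pd (UU u) e3 (p.1, p.2, θ)) ^ 2 *
            Real.exp (2 * lam p.1 p.2))
        - (∫ p : ℝ × ℝ, (Xg3 lam u (p.1, p.2, θ)) ^ 2 * Real.exp (2 * lam p.1 p.2))
      = ∫ p : ℝ × ℝ, pd (CC lam u) e3 (p.1, p.2, θ) := by
    intro θ
    have h12 : Integrable (fun p : ℝ × ℝ =>
        (VX3 lam u (p.1, p.2, θ)) ^ 2 * Real.exp (2 * lam p.1 p.2)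
          - (XV3 lam u (p.1, p.2, θ)) ^ 2 * Real.exp (2 * lam p.1 p.2)) :=
      (hi1 θ).sub (hi2 θ)
    have h123 : Integrable (fun p : ℝ × ℝ =>
        (VX3 lam u (p.1, p.2, θ)) ^ 2 * Real.exp (2 * lam p.1 p.2)
          - (XV3 lam u (p.1, p.2, θ)) ^ 2 * Real.exp (2 * lam p.1 p.2)
          + GC2 lam (p.1, p.2) * (pd (UU u) e3 (p.1, p.2, θ)) ^ 2 *
            Real.exp (2 * lam p.1 p.2)) := h12.add (hi3 θ)
    rw [← MeasureTheory.integral_sub (hi1 θ) (hi2 θ),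
      ← MeasureTheory.integral_add h12 (hi3 θ),
      ← MeasureTheory.integral_sub h123 (hi4 θ)]
    have hfun : (fun p : ℝ × ℝ =>
        (VX3 lam u (p.1, p.2, θ)) ^ 2 * Real.exp (2 * lam p.1 p.2)
          - (XV3 lam u (p.1, p.2, θ)) ^ 2 * Real.exp (2 * lam p.1 p.2)
          + GC2 lam (p.1, p.2) * (pd (UU u) e3 (p.1, p.2, θ)) ^ 2 * Real.exp (2 * lam p.1 p.2)
          - (Xg3 lam u (p.1, p.2, θ)) ^ 2 * Real.exp (2 * lam p.1 p.2)) =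
        fun p : ℝ × ℝ => pd (AA lam u) e1 (p.1, p.2, θ) + pd (BB lam u) e2 (p.1, p.2, θ)
          + pd (CC lam u) e3 (p.1, p.2, θ) :=
      funext fun p => key2 hl hu' p.1 p.2 θ
    have hAB : Integrable (fun p : ℝ × ℝ =>
        pd (AA lam u) e1 (p.1, p.2, θ) + pd (BB lam u) e2 (p.1, p.2, θ)) :=
      (iAA θ).add (iBB θ)
    rw [hfun, MeasureTheory.integral_add hAB (iCC θ),
      MeasureTheory.integral_add (iAA θ) (iBB θ),
      integral2_pd_x_zero (contDiff_AA hl hu') hK (AA_zero hK hs) θ,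
      integral2_pd_y_zero (contDiff_BB hl hu') hK (BB_zero hK hs) θ]
    ring
  -- interval integrability of the four θ-functions
  have hg1 : Continuous (fun θ : ℝ => ∫ p : ℝ × ℝ,
      (VX3 lam u (p.1, p.2, θ)) ^ 2 * Real.exp (2 * lam p.1 p.2)) := by
    refine continuous_param_integral (K := K)
      (g := fun (p : ℝ × ℝ) (θ : ℝ) =>
        (VX3 lam u (p.1, p.2, θ)) ^ 2 * Real.exp (2 * lam p.1 p.2)) ?_ hK ?_
    · exact ((hcV.comp (by fun_prop)).pow 2).mul (hce.comp (by fun_prop))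
    · intro p θ' hp
      rw [VX3_zero hK hs (p.1, p.2, θ') (by simpa [Sc] using hp)]
      simp
  have hg2 : Continuous (fun θ : ℝ => ∫ p : ℝ × ℝ,
      (XV3 lam u (p.1, p.2, θ)) ^ 2 * Real.exp (2 * lam p.1 p.2)) := by
    refine continuous_param_integral (K := K)
      (g := fun (p : ℝ × ℝ) (θ : ℝ) =>
        (XV3 lam u (p.1, p.2, θ)) ^ 2 * Real.exp (2 * lam p.1 p.2)) ?_ hK ?_
    · exact ((hcXV.comp (by fun_prop)).pow 2).mul (hce.comp (by fun_prop))
    · intro p θ' hp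
      rw [XV3_zero hK hs (p.1, p.2, θ') (by simpa [Sc] using hp)]
      simp
  have hg3 : Continuous (fun θ : ℝ => ∫ p : ℝ × ℝ,
      GC2 lam (p.1, p.2) * (pd (UU u) e3 (p.1, p.2, θ)) ^ 2 * Real.exp (2 * lam p.1 p.2)) := by
    refine continuous_param_integral (K := K)
      (g := fun (p : ℝ × ℝ) (θ : ℝ) =>
        GC2 lam (p.1, p.2) * (pd (UU u) e3 (p.1, p.2, θ)) ^ 2 *
          Real.exp (2 * lam p.1 p.2)) ?_ hK ?_
    · exact (((hcGC.comp (by fun_prop)).mul ((hcU3.comp (by fun_prop)).pow 2)).mul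
        (hce.comp (by fun_prop)))
    · intro p θ' hp
      rw [pdU_zero hK hs e3 (p.1, p.2, θ') (by simpa [Sc] using hp)]
      simp
  have hg4 : Continuous (fun θ : ℝ => ∫ p : ℝ × ℝ,
      (Xg3 lam u (p.1, p.2, θ)) ^ 2 * Real.exp (2 * lam p.1 p.2)) := by
    refine continuous_param_integral (K := K)
      (g := fun (p : ℝ × ℝ) (θ : ℝ) =>
        (Xg3 lam u (p.1, p.2, θ)) ^ 2 * Real.exp (2 * lam p.1 p.2)) ?_ hK ?_
    · exact ((hcXg.comp (by fun_prop)).pow 2).mul (hce.comp (by fun_prop))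
    · intro p θ' hp
      rw [Xg3_zero hK hs (p.1, p.2, θ') (by simpa [Sc] using hp)]
      simp
  have hI1 : IntervalIntegrable _ MeasureTheory.volume (0:ℝ) (2 * Real.pi) :=
    hg1.intervalIntegrable (0:ℝ) (2 * Real.pi)
  have hI2 : IntervalIntegrable _ MeasureTheory.volume (0:ℝ) (2 * Real.pi) :=
    hg2.intervalIntegrable (0:ℝ) (2 * Real.pi)
  have hI3 : IntervalIntegrable _ MeasureTheory.volume (0:ℝ) (2 * Real.pi) :=
    hg3.intervalIntegrable (0:ℝ) (2 * Real.pi)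
  have hI4 : IntervalIntegrable _ MeasureTheory.volume (0:ℝ) (2 * Real.pi) :=
    hg4.intervalIntegrable (0:ℝ) (2 * Real.pi)
  -- conclude
  have hsum : (∫ θ in (0:ℝ)..(2 * Real.pi), ∫ p : ℝ × ℝ,
        (VX3 lam u (p.1, p.2, θ)) ^ 2 * Real.exp (2 * lam p.1 p.2))
      - (∫ θ in (0:ℝ)..(2 * Real.pi), ∫ p : ℝ × ℝ,
        (XV3 lam u (p.1, p.2, θ)) ^ 2 * Real.exp (2 * lam p.1 p.2))
      + (∫ θ in (0:ℝ)..(2 * Real.pi), ∫ p : ℝ × ℝ,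
        GC2 lam (p.1, p.2) * (pd (UU u) e3 (p.1, p.2, θ)) ^ 2 * Real.exp (2 * lam p.1 p.2))
      - (∫ θ in (0:ℝ)..(2 * Real.pi), ∫ p : ℝ × ℝ,
        (Xg3 lam u (p.1, p.2, θ)) ^ 2 * Real.exp (2 * lam p.1 p.2)) = 0 := by
    have hJ12 : IntervalIntegrable (fun θ : ℝ =>
        (∫ p : ℝ × ℝ, (VX3 lam u (p.1, p.2, θ)) ^ 2 * Real.exp (2 * lam p.1 p.2))
          - ∫ p : ℝ × ℝ, (XV3 lam u (p.1, p.2, θ)) ^ 2 * Real.exp (2 * lam p.1 p.2))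
        MeasureTheory.volume (0:ℝ) (2 * Real.pi) := hI1.sub hI2
    have hJ123 : IntervalIntegrable (fun θ : ℝ =>
        (∫ p : ℝ × ℝ, (VX3 lam u (p.1, p.2, θ)) ^ 2 * Real.exp (2 * lam p.1 p.2))
          - (∫ p : ℝ × ℝ, (XV3 lam u (p.1, p.2, θ)) ^ 2 * Real.exp (2 * lam p.1 p.2))
          + ∫ p : ℝ × ℝ, GC2 lam (p.1, p.2) * (pd (UU u) e3 (p.1, p.2, θ)) ^ 2 *
              Real.exp (2 * lam p.1 p.2))
        MeasureTheory.volume (0:ℝ) (2 * Real.pi) := hJ12.add hI3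
    rw [← intervalIntegral.integral_sub hI1 hI2,
      ← intervalIntegral.integral_add hJ12 hI3,
      ← intervalIntegral.integral_sub hJ123 hI4]
    rw [intervalIntegral.integral_congr (g := fun θ : ℝ =>
      ∫ p : ℝ × ℝ, pd (CC lam u) e3 (p.1, p.2, θ)) (fun θ _ => hθeq θ)]
    exact integral_pdθ_zero (contDiff_CC hl hu') hK (CC_zero hK hs) (CC_per hu' hper)
  linarith
end
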